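/- arXiv:2211.12474 — 2 statements merged into one kernel-verified Lean document; each statement's English description precedes it below -/
import Mathlib

section
/- Let Ω = (0,b) and let u ∈ H¹_ρ(Ω) (with weight ρ(x) = x) satisfy the nonlocal condition ∫₀ᵇ x u(x) dx = 0. Then ‖u‖²_{L²_ρ(Ω)} ≤ (b²/4) ‖uₓ‖²_{L²_ρ(Ω)}. -/
/-!
Let `V x = ∫₀ˣ t u(t) dt`. The mean condition gives `V 0 = V b = 0`, so integration by parts
yields `I := ∫₀ᵇ x u² = -∫₀ᵇ u' V`. Cauchy–Schwarz with weight `t` on `[0, x]` gives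
`V(x)² ≤ (x²/2) I`, hence `∫₀ᵇ V²/x ≤ (b²/4) I`. Cauchy–Schwarz with weight `x` applied to
`u' V = x · u' · (V/x)` then gives `I² ≤ J · (b²/4) I` with `J := ∫₀ᵇ x u'²`, i.e. `I ≤ (b²/4) J`.
-/

open MeasureTheory intervalIntegral Set

section CauchySchwarz

variable {α : Type*} [MeasurableSpace α] {μ : Measure α} {w f g : α → ℝ}

theorem integrable_weight_mul_mul (hw : 0 ≤ᵐ[μ] w)
    (hf : Integrable (fun x => w x * f x ^ 2) μ) (hg : Integrable (fun x => w x * g x ^ 2) μ)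
    (hfg : AEStronglyMeasurable (fun x => w x * (f x * g x)) μ) :
    Integrable (fun x => w x * (f x * g x)) μ := by
  refine ((hf.add hg).div_const 2).mono' hfg ?_
  filter_upwards [hw] with x (hx : 0 ≤ w x)
  have hamgm := two_mul_le_add_sq |f x| |g x|
  rw [sq_abs, sq_abs] at hamgm
  rw [Real.norm_eq_abs, abs_mul, abs_of_nonneg hx, abs_mul, Pi.add_apply]
  nlinarith [mul_le_mul_of_nonneg_left hamgm hx]

theorem sq_integral_weight_mul_mul_le (hw : 0 ≤ᵐ[μ] w)
    (hf : Integrable (fun x => w x * f x ^ 2) μ) (hg : Integrable (fun x => w x * g x ^ 2) μ)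
    (hfg : Integrable (fun x => w x * (f x * g x)) μ) :
    (∫ x, w x * (f x * g x) ∂μ) ^ 2 ≤ (∫ x, w x * f x ^ 2 ∂μ) * ∫ x, w x * g x ^ 2 ∂μ := by
  have hquad : ∀ t : ℝ, 0 ≤ (∫ x, w x * g x ^ 2 ∂μ) * (t * t)
      + 2 * (∫ x, w x * (f x * g x) ∂μ) * t + ∫ x, w x * f x ^ 2 ∂μ := by
    intro t
    have hexp : ∫ x, w x * (f x + t * g x) ^ 2 ∂μ = (∫ x, w x * g x ^ 2 ∂μ) * (t * t)
        + 2 * (∫ x, w x * (f x * g x) ∂μ) * t + ∫ x, w x * f x ^ 2 ∂μ := by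
      have hpoly : (fun x => w x * (f x + t * g x) ^ 2) = fun x =>
          w x * g x ^ 2 * (t * t) + w x * (f x * g x) * (2 * t) + w x * f x ^ 2 := by
        funext x; ring
      rw [hpoly, integral_add (by exact (hg.mul_const _).add (hfg.mul_const _)) hf,
        integral_add (hg.mul_const _) (hfg.mul_const _), MeasureTheory.integral_mul_const,
        MeasureTheory.integral_mul_const]
      ring
    rw [← hexp]
    refine integral_nonneg_of_ae ?_
    filter_upwards [hw] with x hx
    exact mul_nonneg hx (sq_nonneg _)
  have hdisc := discrim_le_zero hquad
  rw [discrim] at hdisc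
  linarith

end CauchySchwarz

theorem sq_intervalIntegral_weight_mul_mul_le {a b : ℝ} {w f g : ℝ → ℝ} (hab : a ≤ b)
    (hw : ∀ x ∈ Ioc a b, 0 ≤ w x)
    (hf : IntervalIntegrable (fun x => w x * f x ^ 2) volume a b)
    (hg : IntervalIntegrable (fun x => w x * g x ^ 2) volume a b)
    (hfg : IntervalIntegrable (fun x => w x * (f x * g x)) volume a b) :
    (∫ x in a..b, w x * (f x * g x)) ^ 2 ≤
      (∫ x in a..b, w x * f x ^ 2) * ∫ x in a..b, w x * g x ^ 2 := by
  simp only [integral_of_le hab]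
  rw [intervalIntegrable_iff_integrableOn_Ioc_of_le hab] at hf hg hfg
  exact sq_integral_weight_mul_mul_le (ae_restrict_of_forall_mem measurableSet_Ioc hw) hf hg hfg

theorem aestronglyMeasurable_of_hasDerivAt {u u' : ℝ → ℝ} {s : Set ℝ} (hs : MeasurableSet s)
    {μ : Measure ℝ} (h : ∀ x ∈ s, HasDerivAt u (u' x) x) :
    AEStronglyMeasurable u' (μ.restrict s) :=
  (aestronglyMeasurable_deriv u _).congr
    (ae_restrict_of_forall_mem hs fun x hx => (h x hx).deriv)

noncomputable def weightedPrimitive (u : ℝ → ℝ) (x : ℝ) : ℝ := ∫ t in (0:ℝ)..x, t * u t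

namespace weightedPrimitive

variable {u u' : ℝ → ℝ} {b x : ℝ}

@[simp]
theorem apply_zero : weightedPrimitive u 0 = 0 := integral_same

theorem continuousOn (hb : 0 ≤ b) (hu : ContinuousOn u (Icc 0 b)) :
    ContinuousOn (weightedPrimitive u) (Icc 0 b) := by
  have h := continuousOn_primitive_interval'
    ((continuousOn_id.mul hu).intervalIntegrable_of_Icc (μ := volume) hb) left_mem_uIcc
  rwa [uIcc_of_le hb] at h

theorem hasDerivAt (hu : ContinuousOn u (Icc 0 b)) (hx : x ∈ Ioo 0 b) :
    HasDerivAt (weightedPrimitive u) (x * u x) x := by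
  have hcont : ContinuousOn (fun t => t * u t) (Icc 0 b) := continuousOn_id.mul hu
  exact integral_hasDerivAt_right
    ((hcont.mono (Icc_subset_Icc_right hx.2.le)).intervalIntegrable_of_Icc hx.1.le)
    ((hcont.mono Ioo_subset_Icc_self).stronglyMeasurableAtFilter isOpen_Ioo x hx)
    (hcont.continuousAt (Icc_mem_nhds hx.1 hx.2))

theorem sq_le (hx : 0 ≤ x) (hu : IntervalIntegrable (fun t => t * u t) volume 0 x)
    (hu2 : IntervalIntegrable (fun t => t * u t ^ 2) volume 0 x) :
    weightedPrimitive u x ^ 2 ≤ x ^ 2 / 2 * ∫ t in (0:ℝ)..x, t * u t ^ 2 := by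
  have hcs := sq_intervalIntegral_weight_mul_mul_le (w := id) (f := 1) (g := u) hx
    (fun t ht => ht.1.le) (by simp) hu2 (by simpa using hu)
  simpa [weightedPrimitive, integral_id] using hcs

theorem mul_sq_div_le (hu : ContinuousOn u (Icc 0 b))
    (hu2 : IntervalIntegrable (fun t => t * u t ^ 2) volume 0 b) (hx : x ∈ Icc 0 b) :
    x * (weightedPrimitive u x / x) ^ 2 ≤ (∫ t in (0:ℝ)..b, t * u t ^ 2) / 2 * x := by
  rcases hx.1.eq_or_lt with rfl | hx0
  · simp
  have hsub : uIcc 0 x ⊆ uIcc 0 b := uIcc_subset_uIcc_left (mem_uIcc_of_le hx.1 hx.2)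
  have hsq := sq_le hx.1
    (((continuousOn_id.mul hu).mono (Icc_subset_Icc_right hx.2)).intervalIntegrable_of_Icc hx.1)
    (hu2.mono_set hsub)
  have hmono : ∫ t in (0:ℝ)..x, t * u t ^ 2 ≤ ∫ t in (0:ℝ)..b, t * u t ^ 2 :=
    integral_mono_interval le_rfl hx.1 hx.2
      (ae_restrict_of_forall_mem measurableSet_Ioc fun t ht => mul_nonneg ht.1.le (sq_nonneg _))
      hu2
  calc x * (weightedPrimitive u x / x) ^ 2 = weightedPrimitive u x ^ 2 / x := by
        field_simp
    _ ≤ x ^ 2 / 2 * (∫ t in (0:ℝ)..x, t * u t ^ 2) / x := by gcongr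
    _ = (∫ t in (0:ℝ)..x, t * u t ^ 2) / 2 * x := by field_simp
    _ ≤ (∫ t in (0:ℝ)..b, t * u t ^ 2) / 2 * x := by gcongr

theorem continuousOn_div (hb : 0 ≤ b) (hu : ContinuousOn u (Icc 0 b)) :
    ContinuousOn (fun x => weightedPrimitive u x / x) (Ioc 0 b) :=
  ((continuousOn hb hu).mono Ioc_subset_Icc_self).div continuousOn_id fun _ hx => hx.1.ne'

theorem intervalIntegrable_mul_sq_div (hb : 0 ≤ b) (hu : ContinuousOn u (Icc 0 b))
    (hu2 : IntervalIntegrable (fun t => t * u t ^ 2) volume 0 b) :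
    IntervalIntegrable (fun x => x * (weightedPrimitive u x / x) ^ 2) volume 0 b := by
  refine (intervalIntegrable_id.const_mul ((∫ t in (0:ℝ)..b, t * u t ^ 2) / 2)).mono_fun' ?_ ?_
    <;> rw [uIoc_of_le hb]
  · exact (continuousOn_id.mul ((continuousOn_div hb hu).pow 2)).aestronglyMeasurable
      measurableSet_Ioc
  · refine ae_restrict_of_forall_mem measurableSet_Ioc fun x hx => ?_
    exact (Real.norm_of_nonneg (mul_nonneg hx.1.le (sq_nonneg _))).trans_le
      (mul_sq_div_le hu hu2 (Ioc_subset_Icc_self hx))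

theorem integral_mul_sq_div_le (hb : 0 ≤ b) (hu : ContinuousOn u (Icc 0 b))
    (hu2 : IntervalIntegrable (fun t => t * u t ^ 2) volume 0 b) :
    ∫ x in (0:ℝ)..b, x * (weightedPrimitive u x / x) ^ 2 ≤
      b ^ 2 / 4 * ∫ t in (0:ℝ)..b, t * u t ^ 2 := by
  refine (integral_mono_on hb (intervalIntegrable_mul_sq_div hb hu hu2)
    (intervalIntegrable_id.const_mul _) fun x hx => mul_sq_div_le hu hu2 hx).trans_eq ?_
  rw [intervalIntegral.integral_const_mul, integral_id]
  ring

theorem intervalIntegrable_mul_deriv_mul_div (hb : 0 ≤ b)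
    (hderiv : ∀ x ∈ Icc 0 b, HasDerivAt u (u' x) x)
    (hu2 : IntervalIntegrable (fun t => t * u t ^ 2) volume 0 b)
    (hu'2 : IntervalIntegrable (fun x => x * u' x ^ 2) volume 0 b) :
    IntervalIntegrable (fun x => x * (u' x * (weightedPrimitive u x / x))) volume 0 b := by
  have hu : ContinuousOn u (Icc 0 b) :=
    continuousOn_of_forall_continuousAt fun x hx => (hderiv x hx).continuousAt
  have hV := intervalIntegrable_mul_sq_div hb hu hu2
  rw [intervalIntegrable_iff_integrableOn_Ioc_of_le hb] at hu'2 hV ⊢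
  refine integrable_weight_mul_mul (ae_restrict_of_forall_mem measurableSet_Ioc
    fun x hx => hx.1.le) hu'2 hV ?_
  exact measurable_id.aestronglyMeasurable.mul
    ((aestronglyMeasurable_of_hasDerivAt measurableSet_Ioc fun x hx =>
      hderiv x (Ioc_subset_Icc_self hx)).mul
      ((continuousOn_div hb hu).aestronglyMeasurable measurableSet_Ioc))

theorem integral_deriv_mul (hb : 0 ≤ b) (hderiv : ∀ x ∈ Icc 0 b, HasDerivAt u (u' x) x)
    (hmean : weightedPrimitive u b = 0)
    (hint : IntervalIntegrable (fun x => u' x * weightedPrimitive u x) volume 0 b) :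
    ∫ x in (0:ℝ)..b, u' x * weightedPrimitive u x = -∫ x in (0:ℝ)..b, x * u x ^ 2 := by
  have hu : ContinuousOn u (Icc 0 b) :=
    continuousOn_of_forall_continuousAt fun x hx => (hderiv x hx).continuousAt
  have huu : IntervalIntegrable (fun x => u x * (x * u x)) volume 0 b :=
    (hu.mul (continuousOn_id.mul hu)).intervalIntegrable_of_Icc hb
  have hparts := integral_eq_sub_of_hasDerivAt_of_le hb (hu.mul (continuousOn hb hu))
    (fun x hx => (hderiv x (Ioo_subset_Icc_self hx)).mul (hasDerivAt hu hx)) (hint.add huu)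
  rw [integral_add hint huu] at hparts
  simp only [Pi.mul_apply, hmean, apply_zero, mul_zero, sub_zero] at hparts
  have : ∫ x in (0:ℝ)..b, u x * (x * u x) = ∫ x in (0:ℝ)..b, x * u x ^ 2 := by
    congr 1 with x; ring
  linarith

end weightedPrimitive

/-- Weighted Poincaré inequality: if `u ∈ H¹_ρ((0,b))` with weight `ρ(x) = x`
(represented by a derivative `u'` with `HasDerivAt`, both weighted square-integrable)
satisfies the nonlocal condition `∫₀ᵇ x u(x) dx = 0`, then
`∫₀ᵇ x u² dx ≤ (b²/4) ∫₀ᵇ x (u')² dx`. -/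
theorem weighted_poincare (b : ℝ) (hb : 0 < b) (u u' : ℝ → ℝ)
    (hderiv : ∀ x ∈ Set.Icc (0:ℝ) b, HasDerivAt u (u' x) x)
    (hu2 : IntervalIntegrable (fun x => x * u x ^ 2) volume 0 b)
    (hu'2 : IntervalIntegrable (fun x => x * u' x ^ 2) volume 0 b)
    (hmean : (∫ x in (0:ℝ)..b, x * u x) = 0) :
    (∫ x in (0:ℝ)..b, x * u x ^ 2) ≤ b ^ 2 / 4 * ∫ x in (0:ℝ)..b, x * u' x ^ 2 := by
  have hu : ContinuousOn u (Icc 0 b) :=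
    continuousOn_of_forall_continuousAt fun x hx => (hderiv x hx).continuousAt
  set V := weightedPrimitive u
  set I := ∫ x in (0:ℝ)..b, x * u x ^ 2
  set J := ∫ x in (0:ℝ)..b, x * u' x ^ 2
  have hprod := weightedPrimitive.intervalIntegrable_mul_deriv_mul_div hb.le hderiv hu2 hu'2
  have hprod_eq : (fun x => x * (u' x * (V x / x))) = fun x => u' x * V x := by
    funext x
    rcases eq_or_ne x 0 with rfl | hx
    · simp [V]
    · field_simp
  have hcs := sq_intervalIntegral_weight_mul_mul_le hb.le (fun x hx => hx.1.le) hu'2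
    (weightedPrimitive.intervalIntegrable_mul_sq_div hb.le hu hu2) hprod
  rw [hprod_eq, weightedPrimitive.integral_deriv_mul hb.le hderiv hmean (hprod_eq ▸ hprod),
    neg_sq] at hcs
  have hI : 0 ≤ I := integral_nonneg hb.le fun x hx => mul_nonneg hx.1 (sq_nonneg _)
  have hJ : 0 ≤ J := integral_nonneg hb.le fun x hx => mul_nonneg hx.1 (sq_nonneg _)
  have hIsq : I ^ 2 ≤ J * (b ^ 2 / 4 * I) := hcs.trans
    (mul_le_mul_of_nonneg_left (weightedPrimitive.integral_mul_sq_div_le hb.le hu hu2) hJ)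
  nlinarith [mul_nonneg hJ (sq_nonneg b)]
end

section
/- Let α ∈ (0,1), M > 0, T > 0, and let φ : [0,T] → ℝ be nonnegative, absolutely continuous, with φ(0) = 0 and (ᶜD₀ₜ^α φ)(t) ≤ M·φ(t) for almost all t. Then φ ≡ 0 on [0,T]. -/
open MeasureTheory intervalIntegral

/-- Caputo derivative of order `α ∈ (0,1)`. -/
noncomputable def caputoDeriv (α : ℝ) (w : ℝ → ℝ) (t : ℝ) : ℝ :=
  (1 / Real.Gamma (1 - α)) * ∫ τ in (0:ℝ)..t, deriv w τ * (t - τ) ^ (-α)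

/-!
Integrating `ᶜD^α φ ≤ M φ` over `[0, t]`, exchanging the order of integration and integrating by
parts (using `φ 0 = 0`) gives `∫₀ᵗ φ τ (t - τ)^(-α) dτ ≤ Γ(1 - α) M ∫₀ᵗ φ`. If `φ` vanishes on
`[0, t₀]` and `t - t₀ ≤ δ`, the left side is at least `δ^(-α) ∫₀ᵗ φ`, so for `δ` small enough
`∫₀ᵗ φ = 0` and, `φ` being continuous and nonnegative, `φ t = 0`. The zero set thus advances
by steps of length `δ` and covers `[0, T]`.
-/

open Set

lemma intervalIntegrable_sub_rpow {r : ℝ} (hr : -1 < r) (c a b : ℝ) :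
    IntervalIntegrable (fun τ => (c - τ) ^ r) volume a b := by
  simpa using (intervalIntegrable_rpow' (a := c - a) (b := c - b) hr).comp_sub_left c

lemma integral_sub_rpow {r : ℝ} (hr : -1 < r) (τ t : ℝ) :
    ∫ s in τ..t, (s - τ) ^ r = (t - τ) ^ (r + 1) / (r + 1) := by
  rw [integral_comp_sub_right (· ^ r), sub_self, integral_rpow (Or.inl hr),
    Real.zero_rpow (by linarith), sub_zero]

section RiemannLiouville

variable {r a t : ℝ}

noncomputable def riemannLiouvilleKernel (r s τ : ℝ) : ℝ :=
  if τ < s then (s - τ) ^ r else 0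

lemma riemannLiouvilleKernel_nonneg (r s τ : ℝ) : 0 ≤ riemannLiouvilleKernel r s τ := by
  unfold riemannLiouvilleKernel
  split_ifs with h
  · exact Real.rpow_nonneg (sub_nonneg.2 h.le) r
  · exact le_rfl

lemma measurable_riemannLiouvilleKernel (r : ℝ) :
    Measurable fun p : ℝ × ℝ => riemannLiouvilleKernel r p.1 p.2 :=
  Measurable.ite (measurableSet_lt measurable_snd measurable_fst)
    ((measurable_fst.sub measurable_snd).pow_const r) measurable_const

lemma integral_riemannLiouvilleKernel_left (hr : -1 < r) {τ : ℝ} (hτ : τ ∈ Icc a t) :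
    IntegrableOn (riemannLiouvilleKernel r · τ) (Ioc a t) ∧
      ∫ s in Ioc a t, riemannLiouvilleKernel r s τ = (t - τ) ^ (r + 1) / (r + 1) := by
  have hind : (riemannLiouvilleKernel r · τ) = (Ioi τ).indicator (fun s => (s - τ) ^ r) := by
    ext s; simp [riemannLiouvilleKernel, indicator_apply]
  have hset : Ioc a t ∩ Ioi τ = Ioc τ t := by rw [Ioc_inter_Ioi, sup_eq_right.2 hτ.1]
  rw [hind, integrableOn_indicator_iff measurableSet_Ioi, setIntegral_indicator measurableSet_Ioi,
    inter_comm, hset, ← integral_of_le hτ.2, integral_sub_rpow hr]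
  refine ⟨?_, rfl⟩
  simpa using ((intervalIntegrable_rpow' hr (a := 0) (b := t - τ)).comp_sub_right τ).1

lemma integral_mul_riemannLiouvilleKernel_right {f : ℝ → ℝ} {s : ℝ} (hs : s ∈ Ioc a t) :
    ∫ τ in Ioc a t, f τ * riemannLiouvilleKernel r s τ = ∫ τ in a..s, f τ * (s - τ) ^ r := by
  have hind : (fun τ => f τ * riemannLiouvilleKernel r s τ)
      = (Iio s).indicator (fun τ => f τ * (s - τ) ^ r) := by
    ext τ; simp [riemannLiouvilleKernel, indicator_apply]
  have hset : Ioc a t ∩ Iio s = Ioo a s := by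
    ext τ; simp only [mem_inter_iff, mem_Ioc, mem_Iio, mem_Ioo]
    exact ⟨fun h => ⟨h.1.1, h.2⟩, fun h => ⟨⟨h.1, h.2.le.trans hs.2⟩, h.2⟩⟩
  rw [hind, setIntegral_indicator measurableSet_Iio, hset, ← integral_Ioc_eq_integral_Ioo,
    integral_of_le hs.1.le]

lemma integrable_mul_riemannLiouvilleKernel (hr : -1 < r) {f : ℝ → ℝ}
    (hf : IntegrableOn f (Ioc a t)) :
    Integrable (fun p : ℝ × ℝ => f p.2 * riemannLiouvilleKernel r p.1 p.2)
      ((volume.restrict (Ioc a t)).prod (volume.restrict (Ioc a t))) := by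
  have hmeas : AEStronglyMeasurable (fun p : ℝ × ℝ => f p.2 * riemannLiouvilleKernel r p.1 p.2)
      ((volume.restrict (Ioc a t)).prod (volume.restrict (Ioc a t))) :=
    hf.aestronglyMeasurable.comp_snd.mul
      (measurable_riemannLiouvilleKernel r).aestronglyMeasurable
  have hnorm : ∀ τ ∈ Ioc a t, ∫ s in Ioc a t, ‖f τ * riemannLiouvilleKernel r s τ‖
      = |f τ| * ((t - τ) ^ (r + 1) / (r + 1)) := fun τ hτ => by
    simp only [norm_mul, Real.norm_eq_abs, abs_of_nonneg (riemannLiouvilleKernel_nonneg r _ τ)]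
    rw [MeasureTheory.integral_const_mul,
      (integral_riemannLiouvilleKernel_left hr (Ioc_subset_Icc_self hτ)).2]
  rw [integrable_prod_iff' hmeas]
  refine ⟨(ae_restrict_mem measurableSet_Ioc).mono fun τ hτ =>
    ((integral_riemannLiouvilleKernel_left hr (Ioc_subset_Icc_self hτ)).1.const_mul (f τ)), ?_⟩
  have hcont : ContinuousOn (fun τ => (t - τ) ^ (r + 1) / (r + 1)) (Icc a t) :=
    ((continuous_const.sub continuous_id).rpow_const fun _ =>
      Or.inr (by linarith)).continuousOn.div_const _
  refine (IntegrableOn.mul_continuousOn_of_subset hf.norm hcont measurableSet_Ioc isCompact_Icc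
    Ioc_subset_Icc_self).congr ?_
  filter_upwards [ae_restrict_mem measurableSet_Ioc] with τ hτ
  rw [hnorm τ hτ, Real.norm_eq_abs]

theorem intervalIntegrable_integral_mul_sub_rpow (hr : -1 < r) (hat : a ≤ t) {f : ℝ → ℝ}
    (hf : IntervalIntegrable f volume a t) :
    IntervalIntegrable (fun s => ∫ τ in a..s, f τ * (s - τ) ^ r) volume a t := by
  rw [intervalIntegrable_iff_integrableOn_Ioc_of_le hat]
  refine (integrable_mul_riemannLiouvilleKernel hr hf.1).integral_prod_left.congr ?_
  filter_upwards [ae_restrict_mem measurableSet_Ioc] with s hs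
  exact integral_mul_riemannLiouvilleKernel_right hs

theorem integral_integral_mul_sub_rpow (hr : -1 < r) (hat : a ≤ t) {f : ℝ → ℝ}
    (hf : IntervalIntegrable f volume a t) :
    ∫ s in a..t, ∫ τ in a..s, f τ * (s - τ) ^ r
      = (∫ τ in a..t, f τ * (t - τ) ^ (r + 1)) / (r + 1) := by
  rw [integral_of_le hat, integral_of_le hat, ← MeasureTheory.integral_div]
  calc ∫ s in Ioc a t, ∫ τ in a..s, f τ * (s - τ) ^ r
      = ∫ s in Ioc a t, ∫ τ in Ioc a t, f τ * riemannLiouvilleKernel r s τ :=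
        setIntegral_congr_fun measurableSet_Ioc fun s hs =>
          (integral_mul_riemannLiouvilleKernel_right hs).symm
    _ = ∫ τ in Ioc a t, ∫ s in Ioc a t, f τ * riemannLiouvilleKernel r s τ :=
        integral_integral_swap (integrable_mul_riemannLiouvilleKernel hr hf.1)
    _ = ∫ τ in Ioc a t, f τ * (t - τ) ^ (r + 1) / (r + 1) :=
        setIntegral_congr_fun measurableSet_Ioc fun τ hτ => by
          rw [MeasureTheory.integral_const_mul, (integral_riemannLiouvilleKernel_left hr
            (Ioc_subset_Icc_self hτ)).2, mul_div_assoc]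

end RiemannLiouville

theorem integral_mul_sub_rpow_of_hasDerivAt {f f' : ℝ → ℝ} {p a t : ℝ} (hp : 0 < p)
    (hat : a ≤ t) (hf : ∀ x ∈ Icc a t, HasDerivAt f (f' x) x)
    (hf' : IntervalIntegrable f' volume a t) :
    ∫ τ in a..t, f' τ * (t - τ) ^ p
      = p * (∫ τ in a..t, f τ * (t - τ) ^ (p - 1)) - f a * (t - a) ^ p := by
  have hfc : ContinuousOn f (uIcc a t) := fun x hx =>
    (hf x (uIcc_of_le hat ▸ hx)).continuousAt.continuousWithinAt
  have hkc : ContinuousOn (fun τ => (t - τ) ^ p) (uIcc a t) :=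
    ((continuous_const.sub continuous_id).rpow_const fun _ => Or.inr hp.le).continuousOn
  have hk' : ∀ x ∈ Ioo (min a t) (max a t),
      HasDerivAt (fun τ => (t - τ) ^ p) (-(p * (t - x) ^ (p - 1))) x := fun x hx => by
    rw [min_eq_left hat, max_eq_right hat] at hx
    simpa using ((hasDerivAt_id x).const_sub t).rpow_const (p := p)
      (Or.inl (sub_ne_zero.2 hx.2.ne'))
  have hparts := integral_mul_deriv_eq_deriv_mul_of_hasDerivAt hkc hfc hk'
    (fun x hx => hf x (Ioo_subset_Icc_self (by rwa [min_eq_left hat, max_eq_right hat] at hx)))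
    ((intervalIntegrable_sub_rpow (by linarith) t a t).const_mul p).neg hf'
  simp only [sub_self, Real.zero_rpow hp.ne', zero_mul, zero_sub, neg_mul,
    intervalIntegral.integral_neg, mul_assoc, intervalIntegral.integral_const_mul] at hparts
  simp_rw [mul_comm (f' _), hparts, mul_comm (f _)]
  ring

lemma caputoDeriv_eq_of_hasDerivAt {α s : ℝ} (hs : 0 ≤ s) {φ φ' : ℝ → ℝ}
    (hderiv : ∀ x ∈ Icc 0 s, HasDerivAt φ (φ' x) x) :
    caputoDeriv α φ s = (1 / Real.Gamma (1 - α)) * ∫ τ in (0:ℝ)..s, φ' τ * (s - τ) ^ (-α) := by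
  unfold caputoDeriv
  congr 1
  refine integral_congr fun τ hτ => ?_
  rw [(hderiv τ (uIcc_of_le hs ▸ hτ)).deriv]

section Caputo

variable {α t : ℝ} {φ φ' : ℝ → ℝ}

theorem intervalIntegrable_caputoDeriv (hα : α < 1) (ht : 0 ≤ t)
    (hderiv : ∀ x ∈ Icc 0 t, HasDerivAt φ (φ' x) x) (hint : IntervalIntegrable φ' volume 0 t) :
    IntervalIntegrable (caputoDeriv α φ) volume 0 t := by
  rw [intervalIntegrable_iff_integrableOn_Ioc_of_le ht]
  refine IntegrableOn.congr_fun ((intervalIntegrable_integral_mul_sub_rpow (r := -α)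
    (by linarith) ht hint).1.const_mul (1 / Real.Gamma (1 - α))) (fun s hs => ?_)
    measurableSet_Ioc
  exact (caputoDeriv_eq_of_hasDerivAt hs.1.le fun x hx => hderiv x ⟨hx.1, hx.2.trans hs.2⟩).symm

theorem integral_caputoDeriv (hα : α < 1) (ht : 0 ≤ t)
    (hderiv : ∀ x ∈ Icc 0 t, HasDerivAt φ (φ' x) x) (hint : IntervalIntegrable φ' volume 0 t)
    (h0 : φ 0 = 0) :
    ∫ s in (0:ℝ)..t, caputoDeriv α φ s
      = (1 / Real.Gamma (1 - α)) * ∫ τ in (0:ℝ)..t, φ τ * (t - τ) ^ (-α) := by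
  have h1α : (1:ℝ) - α ≠ 0 := by linarith
  calc ∫ s in (0:ℝ)..t, caputoDeriv α φ s
      = ∫ s in (0:ℝ)..t, (1 / Real.Gamma (1 - α)) * ∫ τ in (0:ℝ)..s, φ' τ * (s - τ) ^ (-α) :=
        integral_congr fun s hs => caputoDeriv_eq_of_hasDerivAt (uIcc_of_le ht ▸ hs).1
          fun x hx => hderiv x ⟨hx.1, hx.2.trans (uIcc_of_le ht ▸ hs).2⟩
    _ = (1 / Real.Gamma (1 - α)) * ((∫ τ in (0:ℝ)..t, φ' τ * (t - τ) ^ (1 - α)) / (1 - α)) := by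
        rw [intervalIntegral.integral_const_mul,
          integral_integral_mul_sub_rpow (by linarith) ht hint, neg_add_eq_sub]
    _ = (1 / Real.Gamma (1 - α)) * ∫ τ in (0:ℝ)..t, φ τ * (t - τ) ^ (-α) := by
        simp only [integral_mul_sub_rpow_of_hasDerivAt (sub_pos.2 hα) ht hderiv hint, h0,
          zero_mul, sub_zero, sub_sub_cancel_left, mul_div_cancel_left₀ _ h1α]

theorem integral_mul_sub_rpow_neg_le_of_caputoDeriv_le {M : ℝ} (hα : α < 1) (ht : 0 ≤ t)
    (hderiv : ∀ x ∈ Icc 0 t, HasDerivAt φ (φ' x) x) (hint : IntervalIntegrable φ' volume 0 t)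
    (h0 : φ 0 = 0)
    (hineq : ∀ᵐ s ∂(volume.restrict (Icc 0 t)), caputoDeriv α φ s ≤ M * φ s) :
    ∫ τ in (0:ℝ)..t, φ τ * (t - τ) ^ (-α) ≤ Real.Gamma (1 - α) * M * ∫ τ in (0:ℝ)..t, φ τ := by
  have hΓ : 0 < Real.Gamma (1 - α) := Real.Gamma_pos_of_pos (by linarith)
  have hφ : IntervalIntegrable φ volume 0 t := ContinuousOn.intervalIntegrable fun x hx =>
    (hderiv x (uIcc_of_le ht ▸ hx)).continuousAt.continuousWithinAt
  have hmono := integral_mono_ae_restrict ht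
    (intervalIntegrable_caputoDeriv hα ht hderiv hint) (hφ.const_mul M) hineq
  rw [integral_caputoDeriv hα ht hderiv hint h0, intervalIntegral.integral_const_mul,
    one_div_mul_eq_div, div_le_iff₀ hΓ] at hmono
  linarith

end Caputo

theorem eq_zero_of_integral_mul_sub_rpow_neg_le {φ : ℝ → ℝ} {α κ a t₀ t : ℝ} (hα0 : 0 ≤ α)
    (hα1 : α < 1) (hat : a < t) (hφc : ContinuousOn φ (Icc a t))
    (hφ : ∀ τ ∈ Icc a t, 0 ≤ φ τ) (hzero : ∀ τ ∈ Icc a t₀, φ τ = 0)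
    (hκ : κ < (t - t₀) ^ (-α))
    (hle : ∫ τ in a..t, φ τ * (t - τ) ^ (-α) ≤ κ * ∫ τ in a..t, φ τ) :
    φ t = 0 := by
  have hφi : IntervalIntegrable φ volume a t := hφc.intervalIntegrable_of_Icc hat.le
  have hlower : (t - t₀) ^ (-α) * ∫ τ in a..t, φ τ ≤ ∫ τ in a..t, φ τ * (t - τ) ^ (-α) := by
    rw [← intervalIntegral.integral_const_mul]
    refine integral_mono_on_of_le_Ioo hat.le (hφi.const_mul _)
      ((intervalIntegrable_sub_rpow (by linarith) t a t).continuousOn_mul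
        (uIcc_of_le hat.le ▸ hφc)) fun τ hτ => ?_
    rcases le_or_gt τ t₀ with hτt₀ | hτt₀
    · simp [hzero τ ⟨hτ.1.le, hτt₀⟩]
    · rw [mul_comm]
      exact mul_le_mul_of_nonneg_left (Real.rpow_le_rpow_of_nonpos (by linarith [hτ.2])
        (by linarith) (by linarith)) (hφ τ (Ioo_subset_Icc_self hτ))
  have hintegral_nonpos : ∫ τ in a..t, φ τ ≤ 0 := by
    have := hlower.trans hle
    nlinarith
  by_contra hne
  have hpos : 0 < ∫ τ in a..t, φ τ := by
    refine integral_pos hat hφc (fun τ hτ => hφ τ (Ioc_subset_Icc_self hτ))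
      ⟨t, right_mem_Icc.2 hat.le, (hφ t (right_mem_Icc.2 hat.le)).lt_of_ne' hne⟩
  linarith

theorem Icc_subset_of_forall_step {S : Set ℝ} {a b δ : ℝ} (hδ : 0 < δ) (ha : a ∈ S)
    (hstep : ∀ t₀ t, a ≤ t₀ → t₀ < t → t ≤ b → t - t₀ ≤ δ → Icc a t₀ ⊆ S → t ∈ S) :
    Icc a b ⊆ S := by
  have hind : ∀ n : ℕ, ∀ t ∈ Icc a b, t ≤ a + n * δ → t ∈ S := by
    intro n
    induction n with
    | zero => intro t ht htn; simpa [le_antisymm (by simpa using htn) ht.1] using ha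
    | succ n ih =>
      intro t ht htn
      rcases le_or_gt t (a + n * δ) with h | h
      · exact ih t ht h
      · refine hstep (a + n * δ) t (le_add_of_nonneg_right (by positivity)) h ht.2
          (by push_cast at htn; linarith)
          fun τ hτ => ih τ ⟨hτ.1, hτ.2.trans (h.le.trans ht.2)⟩ hτ.2
  intro t ht
  obtain ⟨n, hn⟩ := exists_nat_ge ((t - a) / δ)
  exact hind n t ht (by rw [div_le_iff₀ hδ] at hn; linarith)

lemma exists_pos_forall_lt_rpow_neg {α : ℝ} (hα : 0 < α) (κ : ℝ) :
    ∃ δ > 0, ∀ x ∈ Ioc 0 δ, κ < x ^ (-α) := by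
  refine ⟨(|κ| + 1) ^ (-α⁻¹), by positivity, fun x hx => ?_⟩
  calc κ < |κ| + 1 := by linarith [le_abs_self κ]
    _ = ((|κ| + 1) ^ (-α⁻¹)) ^ (-α) := by
        rw [← Real.rpow_mul (by positivity), neg_mul_neg, inv_mul_cancel₀ hα.ne', Real.rpow_one]
    _ ≤ x ^ (-α) := Real.rpow_le_rpow_of_nonpos hx.1 hx.2 (by linarith)

theorem fractional_gronwall_degenerate_general (T α M : ℝ) (hα0 : 0 < α)
    (hα1 : α < 1) (φ φ' : ℝ → ℝ)
    (hnonneg : ∀ t ∈ Set.Icc (0:ℝ) T, 0 ≤ φ t)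
    (hderiv : ∀ t ∈ Set.Icc (0:ℝ) T, HasDerivAt φ (φ' t) t)
    (hint : IntervalIntegrable φ' volume 0 T)
    (h0 : φ 0 = 0)
    (hineq : ∀ᵐ t ∂(volume.restrict (Set.Icc (0:ℝ) T)), caputoDeriv α φ t ≤ M * φ t) :
    ∀ t ∈ Set.Icc (0:ℝ) T, φ t = 0 := by
  obtain ⟨δ, hδ, hκ⟩ := exists_pos_forall_lt_rpow_neg hα0 (Real.Gamma (1 - α) * M)
  refine fun t ht => Icc_subset_of_forall_step (S := {t | φ t = 0}) hδ h0
    (fun t₀ t ht₀ ht₀t htT htδ hzero => ?_) ht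
  have hsub : Icc 0 t ⊆ Icc 0 T := Icc_subset_Icc_right htT
  have ht : 0 < t := ht₀.trans_lt ht₀t
  exact eq_zero_of_integral_mul_sub_rpow_neg_le hα0.le hα1 ht
    (fun x hx => (hderiv x (hsub hx)).continuousAt.continuousWithinAt)
    (fun x hx => hnonneg x (hsub hx)) hzero (hκ _ ⟨sub_pos.2 ht₀t, htδ⟩)
    (integral_mul_sub_rpow_neg_le_of_caputoDeriv_le hα1 ht.le (fun x hx => hderiv x (hsub hx))
      (hint.mono_set (by simp [uIcc_of_le ht.le, uIcc_of_le (ht.le.trans htT), hsub])) h0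
      (ae_restrict_of_ae_restrict_of_subset hsub hineq))

/-- Degenerate fractional Gronwall lemma: if `φ` is nonnegative, absolutely continuous
on `[0,T]` with `φ(0) = 0` and `(ᶜD₀ₜ^α φ)(t) ≤ M φ(t)` for almost all `t`, where
`α ∈ (0,1)` and `M > 0`, then `φ ≡ 0` on `[0,T]`. -/
theorem fractional_gronwall_degenerate (T α M : ℝ) (hT : 0 < T) (hα0 : 0 < α)
    (hα1 : α < 1) (hM : 0 < M) (φ φ' : ℝ → ℝ)
    (hnonneg : ∀ t ∈ Set.Icc (0:ℝ) T, 0 ≤ φ t)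
    (hderiv : ∀ t ∈ Set.Icc (0:ℝ) T, HasDerivAt φ (φ' t) t)
    (hint : IntervalIntegrable φ' volume 0 T)
    (h0 : φ 0 = 0)
    (hineq : ∀ᵐ t ∂(volume.restrict (Set.Icc (0:ℝ) T)), caputoDeriv α φ t ≤ M * φ t) :
    ∀ t ∈ Set.Icc (0:ℝ) T, φ t = 0 :=
  fractional_gronwall_degenerate_general T α M hα0 hα1 φ φ' hnonneg hderiv hint h0 hineq
end
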